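/- Let n ≥ 1, j ≥ 1, and s ∈ {0,…,n}. Then the single-agent update probabilities of (2j−1)-Majority and 2j-Majority coincide: q_{2j-1}(s) = q_{2j}(s), i.e., P(Bin(2j−1, s/n) ≥ j) = P(Bin(2j, s/n) ≥ j+1) + (1/2)·P(Bin(2j, s/n) = j); equivalently, the probability that an activated agent with opinion b adopts a, and the probability that an activated agent with opinion a adopts b, are the same in both processes. -/

import Mathlib

open MeasureTheory Finset
open scoped ENNReal NNReal

noncomputable section

/-- Probability mass function of a binomial random variable `Bin(m, p)` at `k`. -/
def binomPMF (m k : ℕ) (p : ℝ) : ℝ := (m.choose k : ℝ) * p ^ k * (1 - p) ^ (m - k)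

/-- Tail probability `P(Bin(m, p) ≥ j)`. -/
def binomTail (m j : ℕ) (p : ℝ) : ℝ := ∑ k ∈ Finset.Icc j m, binomPMF m k p

/-- Cumulative distribution function `P(Bin(m, p) ≤ j)`. -/
def binomCDF (m j : ℕ) (p : ℝ) : ℝ := ∑ k ∈ Finset.range (j + 1), binomPMF m k p

/-- `majProb n j s` is the sample-majority probability `q_j(s)`: the probability that an
agent sampling `j` agents uniformly at random with replacement (when `s` of the `n` agents
hold opinion `a`) adopts opinion `a` under majority with uniform tie-breaking.
For odd `j = 2m+1` this is `P(Bin(2m+1, s/n) ≥ m+1)`; for even `j = 2m` it is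
`P(Bin(2m, s/n) ≥ m+1) + (1/2)·P(Bin(2m, s/n) = m)`. -/
def majProb (n j s : ℕ) : ℝ :=
  binomTail j (j / 2 + 1) ((s : ℝ) / n) +
    if Even j then (1 / 2) * binomPMF j (j / 2) ((s : ℝ) / n) else 0

/-- One-step transition kernel of the sequential `j`-Majority process on states `{0, …, n}`:
from state `s`, move to `s+1` with probability `((n-s)/n)·q_j(s)`, to `s-1` with probability
`(s/n)·(1-q_j(s))`, and stay at `s` otherwise. -/
def seqKernel (n j : ℕ) (s u : ℕ) : ℝ :=
  if u = s + 1 then (((n : ℝ) - s) / n) * majProb n j s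
  else if u + 1 = s then ((s : ℝ) / n) * (1 - majProb n j s)
  else if u = s then
    1 - (((n : ℝ) - s) / n) * majProb n j s - ((s : ℝ) / n) * (1 - majProb n j s)
  else 0

/-- One-step transition kernel of the gossip `j`-Majority process on states `{0, …, n}`:
from state `s`, the next state is distributed as `Bin(n, q_j(s))`. -/
def gossipKernel (n j : ℕ) (s u : ℕ) : ℝ := binomPMF n u (majProb n j s)

/-- `kernelTail K n s d` is the mass that the kernel `K` places, from state `s`,
on the set `{d, d+1, …, n}`, i.e. `P(X_{t+1} ≥ d | X_t = s)`. -/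
def kernelTail (K : ℕ → ℕ → ℝ) (n s d : ℕ) : ℝ := ∑ u ∈ Finset.Icc d n, K s u

/-- `IsMarkovChain μ K x X` states that, under the probability measure `μ`, the process
`X` is a Markov chain with one-step transition kernel `K` started at `x`: `X 0 = x`
almost surely, and conditionally on any finite path the next state is distributed
according to `K` applied to the current state. -/
def IsMarkovChain {Ω : Type*} [MeasurableSpace Ω] (μ : Measure Ω)
    (K : ℕ → ℕ → ℝ) (x : ℕ) (X : ℕ → Ω → ℕ) : Prop :=
  IsProbabilityMeasure μ ∧
  (∀ t, Measurable (X t)) ∧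
  μ {ω | X 0 ω = x} = 1 ∧
  ∀ (t : ℕ) (p : ℕ → ℕ) (u : ℕ),
    μ ({ω | X (t + 1) ω = u} ∩ {ω | ∀ i ≤ t, X i ω = p i}) =
      ENNReal.ofReal (K (p t) u) * μ {ω | ∀ i ≤ t, X i ω = p i}

/-- The convergence (hitting) time: the first time `t` with `X t ∈ {0, n}`
(`⊤` if the process never reaches a consensus state). -/
def hitTime {Ω : Type*} (n : ℕ) (X : ℕ → Ω → ℕ) (ω : Ω) : ℕ∞ :=
  ⨅ (t : ℕ) (_ : X t ω = 0 ∨ X t ω = n), (t : ℕ∞)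

/-! A sample of size `2m+2` is a sample of size `2m+1` plus one extra draw. The extra draw
moves the count across the threshold `m+1` only from the central values `m` (up, with
probability `p`) or `m+1` (down, with probability `1-p`), and these two events have the same
weight `p · P(Bin(2m+1,p) = m) = (1-p) · P(Bin(2m+1,p) = m+1)`. So the tie
`P(Bin(2m+2,p) = m+1)` is twice the mass lost above the threshold, and breaking it fairly
restores `P(Bin(2m+1,p) ≥ m+1)`. -/

lemma binomPMF_of_lt {m k : ℕ} (h : m < k) (p : ℝ) : binomPMF m k p = 0 := by
  simp [binomPMF, Nat.choose_eq_zero_of_lt h]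

lemma binomPMF_succ_succ (m k : ℕ) (p : ℝ) :
    binomPMF (m + 1) (k + 1) p = p * binomPMF m k p + (1 - p) * binomPMF m (k + 1) p := by
  rcases lt_or_ge m (k + 1) with hlt | hle
  · rw [binomPMF_of_lt hlt]
    rcases Nat.lt_or_eq_of_le (Nat.le_of_lt_succ hlt) with hlt' | rfl
    · rw [binomPMF_of_lt (by omega), binomPMF_of_lt hlt']
      ring
    · simp [binomPMF, pow_succ]
      ring
  · obtain ⟨d, rfl⟩ := Nat.exists_eq_add_of_le hle
    rw [binomPMF, binomPMF, binomPMF, Nat.choose_succ_succ,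
      show k + 1 + d + 1 - (k + 1) = d + 1 by omega, show k + 1 + d - k = d + 1 by omega,
      show k + 1 + d - (k + 1) = d by omega]
    push_cast
    ring

lemma binomPMF_central_balance (m : ℕ) (p : ℝ) :
    p * binomPMF (2 * m + 1) m p = (1 - p) * binomPMF (2 * m + 1) (m + 1) p := by
  have hchoose : (2 * m + 1).choose (m + 1) = (2 * m + 1).choose m := by
    rw [Nat.choose_symm_of_eq_add]
    ring
  simp only [binomPMF, hchoose, show 2 * m + 1 - m = m + 1 by omega,
    show 2 * m + 1 - (m + 1) = m by omega]
  ring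

lemma binomTail_eq_binomPMF_add {m k : ℕ} (hk : k ≤ m) (p : ℝ) :
    binomTail m k p = binomPMF m k p + binomTail m (k + 1) p := by
  rw [binomTail, binomTail, Finset.Icc_eq_cons_Ioc hk, Finset.sum_cons,
    Finset.Icc_add_one_left_eq_Ioc]

lemma sum_Icc_binomPMF_succ {m k : ℕ} (hk : k ≤ m) (p : ℝ) :
    ∑ i ∈ Icc k m, binomPMF m (i + 1) p = binomTail m (k + 1) p := by
  calc ∑ i ∈ Icc k m, binomPMF m (i + 1) p = ∑ i ∈ Icc (k + 1) (m + 1), binomPMF m i p := by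
        rw [← Finset.map_add_right_Icc, Finset.sum_map]
        rfl
    _ = binomTail m (k + 1) p := by
        rw [Finset.sum_Icc_succ_top (by omega), binomPMF_of_lt (Nat.lt_succ_self m), add_zero,
          binomTail]

lemma binomTail_succ_succ {m k : ℕ} (hk : k ≤ m) (p : ℝ) :
    binomTail (m + 1) (k + 1) p = binomTail m k p - (1 - p) * binomPMF m k p := by
  have hshift : binomTail (m + 1) (k + 1) p = ∑ i ∈ Icc k m, binomPMF (m + 1) (i + 1) p := by
    rw [binomTail, ← Finset.map_add_right_Icc, Finset.sum_map]
    rfl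
  rw [hshift]
  simp only [binomPMF_succ_succ, Finset.sum_add_distrib, ← Finset.mul_sum,
    sum_Icc_binomPMF_succ hk]
  rw [show ∑ i ∈ Icc k m, binomPMF m i p = binomTail m k p from rfl,
    binomTail_eq_binomPMF_add hk]
  ring

theorem binomTail_odd_eq_even_fair_tie (m : ℕ) (p : ℝ) :
    binomTail (2 * m + 1) (m + 1) p =
      binomTail (2 * m + 2) (m + 2) p + 1 / 2 * binomPMF (2 * m + 2) (m + 1) p := by
  have htail := binomTail_succ_succ (show m + 1 ≤ 2 * m + 1 by omega) p
  have htie := binomPMF_succ_succ (2 * m + 1) m p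
  have hbalance := binomPMF_central_balance m p
  rw [htail, htie]
  linarith

theorem majProb_odd_eq_even (n m s : ℕ) :
    majProb n (2 * m + 1) s = majProb n (2 * m + 2) s := by
  have hodd : ¬Even (2 * m + 1) := Nat.not_even_two_mul_add_one m
  have heven : Even (2 * m + 2) := ⟨m + 1, by ring⟩
  simp only [majProb, if_neg hodd, if_pos heven, add_zero,
    show (2 * m + 1) / 2 + 1 = m + 1 by omega,
    show (2 * m + 2) / 2 = m + 1 by omega]
  exact binomTail_odd_eq_even_fair_tie m _

theorem stmt10_general (n j s : ℕ) :
    majProb n (2 * j - 1) s = majProb n (2 * j) s := by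
  obtain _ | m := j
  · rfl
  · rw [show 2 * (m + 1) - 1 = 2 * m + 1 by omega, show 2 * (m + 1) = 2 * m + 2 by ring]
    exact majProb_odd_eq_even n m s

theorem stmt10 (n j s : ℕ) (hn : 1 ≤ n) (hj : 1 ≤ j) (hs : s ≤ n) :
    majProb n (2 * j - 1) s = majProb n (2 * j) s :=
  stmt10_general n j s
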